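/- arXiv:2603.29809 — 3 statements merged into one kernel-verified Lean document; each statement's English description precedes it below -/
import Mathlib

section
/- Let λ : Fin N → ℝ satisfy ∑_s λ_s = 0 and the hypercontractivity-type bound M₄ ≤ 9^k · M₂², where M_p = (1/N)∑_s λ_s^p and M₂ > 0. Then the fraction of pairs (r,s) with |λ_r - λ_s| ≥ √M₂ is at least 1/(3·9^k); i.e., (1/N²)·#{(r,s) : |λ_r-λ_s| ≥ √M₂} ≥ 1/(3·9^k). -/
/-! With `g(r, s) = (λ_r - λ_s)²` on the `N²` pairs, `∑λ = 0` gives `∑ g = 2N²M₂` and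
`∑ g² = 2N²M₄ + 6N²M₂²`. Pairs with `g < M₂` contribute less than `N²M₂` to `∑ g`, so
Cauchy–Schwarz on the remaining pairs (Paley–Zygmund at level `1/2`) bounds their number from
below by `N⁴M₂² / ∑ g² ≥ N² / (2·9^k + 6) ≥ N² / (3·9^k)`, the last step needing `9^k ≥ 6`. -/

open Finset

theorem sq_sum_sub_card_mul_le_card_filter_mul_sum_sq {ι : Type*} (s : Finset ι) (g : ι → ℝ)
    {t : ℝ} (ht : 0 ≤ t) (hmean : #s * t ≤ ∑ i ∈ s, g i) :
    (∑ i ∈ s, g i - #s * t) ^ 2 ≤ #{i ∈ s | t ≤ g i} * ∑ i ∈ s, g i ^ 2 := by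
  have hsmall : ∑ i ∈ s with ¬t ≤ g i, g i ≤ #s * t :=
    calc ∑ i ∈ s with ¬t ≤ g i, g i ≤ #{i ∈ s | ¬t ≤ g i} * t := by
          simpa using sum_le_card_nsmul _ _ t fun i hi => (not_le.mp (mem_filter.mp hi).2).le
      _ ≤ #s * t := by gcongr; exact filter_subset _ _
  have hlarge : ∑ i ∈ s, g i - #s * t ≤ ∑ i ∈ s with t ≤ g i, g i := by
    linarith [sum_filter_add_sum_filter_not s (t ≤ g ·) g]
  calc (∑ i ∈ s, g i - #s * t) ^ 2 ≤ (∑ i ∈ s with t ≤ g i, g i) ^ 2 :=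
        pow_le_pow_left₀ (by linarith) hlarge 2
    _ ≤ #{i ∈ s | t ≤ g i} * ∑ i ∈ s with t ≤ g i, g i ^ 2 := sq_sum_le_card_mul_sum_sq
    _ ≤ #{i ∈ s | t ≤ g i} * ∑ i ∈ s, g i ^ 2 := by
        gcongr
        exact filter_subset _ _

section PairDifferences

variable {ι : Type*} [Fintype ι] {a : ι → ℝ}

theorem sum_sub_sq_of_sum_eq_zero (ha : ∑ i, a i = 0) :
    ∑ p : ι × ι, (a p.1 - a p.2) ^ 2 = 2 * Fintype.card ι * ∑ i, a i ^ 2 := by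
  simp only [Fintype.sum_prod_type, sub_sq, sum_add_distrib, sum_sub_distrib, ← mul_sum,
    ← sum_mul, ha, sum_const, card_univ, nsmul_eq_mul]
  ring

theorem sum_sub_pow_four_of_sum_eq_zero (ha : ∑ i, a i = 0) :
    ∑ p : ι × ι, (a p.1 - a p.2) ^ 4 =
      2 * Fintype.card ι * ∑ i, a i ^ 4 + 6 * (∑ i, a i ^ 2) ^ 2 := by
  have hexp : ∀ x y : ℝ, (x - y) ^ 4 =
      x ^ 4 - 4 * x ^ 3 * y + 6 * x ^ 2 * y ^ 2 - 4 * x * y ^ 3 + y ^ 4 := fun x y => by ring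
  simp only [Fintype.sum_prod_type, hexp, sum_add_distrib, sum_sub_distrib, ← mul_sum,
    ← sum_mul, ha, sum_const, card_univ, nsmul_eq_mul]
  ring

theorem sq_card_mul_sum_sq_le_card_filter_sub_sq_mul [Nonempty ι] (ha : ∑ i, a i = 0) :
    (Fintype.card ι * ∑ i, a i ^ 2) ^ 2 ≤
      #{p : ι × ι | (∑ i, a i ^ 2) / Fintype.card ι ≤ (a p.1 - a p.2) ^ 2} *
        (2 * Fintype.card ι * ∑ i, a i ^ 4 + 6 * (∑ i, a i ^ 2) ^ 2) := by
  have hn : (0 : ℝ) < Fintype.card ι := by exact_mod_cast Fintype.card_pos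
  have hmass : (#(univ : Finset (ι × ι)) : ℝ) * ((∑ i, a i ^ 2) / Fintype.card ι) =
      Fintype.card ι * ∑ i, a i ^ 2 := by
    rw [card_univ, Fintype.card_prod, Nat.cast_mul]; field_simp
  have hpz := sq_sum_sub_card_mul_le_card_filter_mul_sum_sq univ
    (fun p : ι × ι => (a p.1 - a p.2) ^ 2) (t := (∑ i, a i ^ 2) / Fintype.card ι) (by positivity)
  simp only [hmass, sum_sub_sq_of_sum_eq_zero ha, ← pow_mul,
    sum_sub_pow_four_of_sum_eq_zero ha] at hpz
  convert hpz (by nlinarith [sum_nonneg fun i (_ : i ∈ univ) => sq_nonneg (a i)]) using 2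
  ring

end PairDifferences

/-- Spectral spreading: under the hypercontractivity-type moment bound, a constant
fraction of eigenvalue pairs is separated by at least `√M₂`. -/
theorem spectral_spreading {N : ℕ} (hN : 1 ≤ N) (k : ℕ) (hk : 1 ≤ k)
    (lam : Fin N → ℝ) (hsum : ∑ s : Fin N, lam s = 0)
    (M₂ M₄ : ℝ)
    (hM₂ : M₂ = (1 / (N : ℝ)) * ∑ s : Fin N, (lam s) ^ 2)
    (hM₄ : M₄ = (1 / (N : ℝ)) * ∑ s : Fin N, (lam s) ^ 4)
    (hM₂pos : 0 < M₂)
    (hBonami : M₄ ≤ 9 ^ k * M₂ ^ 2) :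
    1 / (3 * 9 ^ k) ≤
      (1 / (N : ℝ) ^ 2) *
        (Nat.card {p : Fin N × Fin N | Real.sqrt M₂ ≤ |lam p.1 - lam p.2|}) := by
  have : Nonempty (Fin N) := ⟨⟨0, hN⟩⟩
  have hNpos : (0 : ℝ) < N := by exact_mod_cast hN
  have hsum₂ : ∑ s, lam s ^ 2 = N * M₂ := by rw [hM₂]; field_simp
  have hsum₄ : ∑ s, lam s ^ 4 = N * M₄ := by rw [hM₄]; field_simp
  set far : Finset (Fin N × Fin N) := {p | M₂ ≤ (lam p.1 - lam p.2) ^ 2}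
  have hcard : Nat.card {p : Fin N × Fin N | Real.sqrt M₂ ≤ |lam p.1 - lam p.2|} = #far := by
    simp_rw [← Real.sqrt_sq_eq_abs, Real.sqrt_le_sqrt_iff (sq_nonneg _)]
    rw [Nat.card_eq_card_toFinset, Set.toFinset_ofPred]
  have hpz := sq_card_mul_sum_sq_le_card_filter_sub_sq_mul hsum
  rw [hsum₂, hsum₄, Fintype.card_fin, mul_div_cancel_left₀ _ hNpos.ne'] at hpz
  have h9k : (9 : ℝ) ≤ 9 ^ k := le_self_pow₀ (by norm_num) (by omega)
  have hmoments : 2 * M₄ + 6 * M₂ ^ 2 ≤ 3 * 9 ^ k * M₂ ^ 2 := by nlinarith [sq_nonneg M₂]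
  have hfar : (N : ℝ) ^ 2 ≤ 3 * 9 ^ k * #far := by
    refine le_of_mul_le_mul_right ?_ (by positivity : (0 : ℝ) < N ^ 2 * M₂ ^ 2)
    calc (N : ℝ) ^ 2 * (N ^ 2 * M₂ ^ 2) = (N * (N * M₂)) ^ 2 := by ring
      _ ≤ #far * (2 * N * (N * M₄) + 6 * (N * M₂) ^ 2) := hpz
      _ = #far * (N ^ 2 * (2 * M₄ + 6 * M₂ ^ 2)) := by ring
      _ ≤ #far * (N ^ 2 * (3 * 9 ^ k * M₂ ^ 2)) := by
          have := mul_le_mul_of_nonneg_left hmoments (sq_nonneg (N : ℝ))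
          exact mul_le_mul_of_nonneg_left this (Nat.cast_nonneg _)
      _ = 3 * 9 ^ k * #far * (N ^ 2 * M₂ ^ 2) := by ring
  rw [hcard, one_div_mul_eq_div, div_le_div_iff₀ (by positivity) (by positivity)]
  linarith
end

section
/- Let λ : Fin N → ℝ, ε > 0, Λ = (1/N²)·#{(r,s) : |λ_r - λ_s| ≥ ε}, and define I(t) = (1/N²) ∑_{r,s} cos((λ_r - λ_s)·t). If t is drawn uniformly from [0, 2/ε], then with probability at least 1/3, I(t) ≤ 1 - Λ/4. -/
open MeasureTheory Real Set

/-!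
For a pair with gap `|δ| ≥ ε`, the positive part of `cos (δ t)` has mean at most `1/2` over
`t ∈ [0, 2/ε]`, because `∫₀^L max (cos x) 0 ≤ L/2` once `L ≥ 2` (with equality at `L = 2`).
Bounding the cosines of the pairs with small gap by `1` gives `I t ≤ 1 - Λ + Λ J t`, where `J`
is the mean of these positive parts over the pairs with large gap. By Markov's inequality
`J t ≥ 3/4` on a set of measure at most `(2/3)(2/ε)`, and elsewhere `I t ≤ 1 - Λ/4`.
-/

noncomputable def cosPosPrimitive (L : ℝ) : ℝ := ∫ x in (0 : ℝ)..L, max (cos x) 0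

lemma continuous_max_cos_zero : Continuous fun x => max (cos x) 0 :=
  continuous_cos.max continuous_const

lemma intervalIntegrable_max_cos_zero (a b : ℝ) :
    IntervalIntegrable (fun x => max (cos x) 0) volume a b :=
  continuous_max_cos_zero.intervalIntegrable a b

lemma cosPosPrimitive_add_intervalIntegral (a b : ℝ) :
    cosPosPrimitive a + ∫ x in a..b, max (cos x) 0 = cosPosPrimitive b :=
  intervalIntegral.integral_add_adjacent_intervals (intervalIntegrable_max_cos_zero _ _)
    (intervalIntegrable_max_cos_zero _ _)

lemma monotone_cosPosPrimitive : Monotone cosPosPrimitive := fun a b hab => by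
  rw [← cosPosPrimitive_add_intervalIntegral a b]
  exact le_add_of_nonneg_right
    (intervalIntegral.integral_nonneg hab fun x _ => le_max_right _ _)

lemma cosPosPrimitive_three_pi_div_two : cosPosPrimitive (3 * π / 2) = 1 := by
  have hcos : EqOn (fun x => max (cos x) 0) cos (uIcc 0 (π / 2)) := by
    intro x hx
    rw [uIcc_of_le (by positivity)] at hx
    exact max_eq_left (cos_nonneg_of_mem_Icc ⟨by linarith [hx.1, pi_pos], hx.2⟩)
  have hzero : EqOn (fun x => max (cos x) 0) 0 (uIcc (π / 2) (3 * π / 2)) := by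
    intro x hx
    rw [uIcc_of_le (by linarith [pi_pos])] at hx
    exact max_eq_right (cos_nonpos_of_pi_div_two_le_of_le hx.1 (by linarith [hx.2]))
  rw [← cosPosPrimitive_add_intervalIntegral (π / 2), cosPosPrimitive,
    intervalIntegral.integral_congr hcos, intervalIntegral.integral_congr hzero]
  simp

lemma cosPosPrimitive_two_pi : cosPosPrimitive (2 * π) = 2 := by
  have hcos : EqOn (fun x => max (cos x) 0) cos (uIcc (3 * π / 2) (2 * π)) := by
    intro x hx
    rw [uIcc_of_le (by linarith [pi_pos])] at hx
    refine max_eq_left ?_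
    rw [← cos_sub_two_pi x]
    exact cos_nonneg_of_mem_Icc ⟨by linarith [hx.1], by linarith [hx.2, pi_pos]⟩
  rw [← cosPosPrimitive_add_intervalIntegral (3 * π / 2), cosPosPrimitive_three_pi_div_two,
    intervalIntegral.integral_congr hcos, integral_cos, sin_two_pi,
    show 3 * π / 2 = π / 2 + π by ring, sin_add_pi, sin_pi_div_two]
  norm_num

lemma cosPosPrimitive_add_two_pi (L : ℝ) :
    cosPosPrimitive (L + 2 * π) = cosPosPrimitive L + 2 := by
  have hper : Function.Periodic (fun x => max (cos x) 0) (2 * π) := fun x => by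
    simp only [cos_add_two_pi]
  have := hper.intervalIntegral_add_eq_add 0 L intervalIntegrable_max_cos_zero
  rwa [zero_add, ← cosPosPrimitive, ← cosPosPrimitive, ← cosPosPrimitive,
    cosPosPrimitive_two_pi] at this

lemma cosPosPrimitive_le_max_of_le_two_pi {L : ℝ} (hL : L ≤ 2 * π) :
    cosPosPrimitive L ≤ max (L / 2) 1 := by
  rcases le_total L (3 * π / 2) with h | h
  · exact (cosPosPrimitive_three_pi_div_two ▸ monotone_cosPosPrimitive h).trans (le_max_right _ _)
  · have := cosPosPrimitive_two_pi ▸ monotone_cosPosPrimitive hL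
    exact this.trans (le_max_of_le_left (by linarith [pi_gt_three]))

-- The bound survives the shift `L ↦ L + 2π`, which adds `2 ≤ π` to the left side.
lemma cosPosPrimitive_le_max (L : ℝ) : cosPosPrimitive L ≤ max (L / 2) 1 := by
  obtain ⟨n, hn⟩ := exists_nat_ge (L / (2 * π))
  rw [div_le_iff₀ (by positivity)] at hn
  induction n generalizing L with
  | zero => exact cosPosPrimitive_le_max_of_le_two_pi (by simp at hn; linarith [pi_pos])
  | succ n ih =>
    rcases le_total L (2 * π) with h | h
    · exact cosPosPrimitive_le_max_of_le_two_pi h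
    · have := ih (L - 2 * π) (by push_cast at hn; linarith)
      rw [← sub_add_cancel L (2 * π), cosPosPrimitive_add_two_pi]
      refine (add_le_add_left this 2).trans ?_
      rw [max_add, max_le_iff]
      constructor <;> apply le_max_of_le_left <;> linarith [pi_gt_three]

lemma cosPosPrimitive_le_half {L : ℝ} (hL : 2 ≤ L) : cosPosPrimitive L ≤ L / 2 :=
  (cosPosPrimitive_le_max L).trans_eq (max_eq_left (by linarith))

lemma integral_max_cos_mul_le_half {δ T : ℝ} (h : 2 ≤ |δ| * T) :
    ∫ t in (0 : ℝ)..T, max (cos (δ * t)) 0 ≤ T / 2 := by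
  have hδ : |δ| ≠ 0 := by rintro h0; rw [h0] at h; norm_num at h
  have habs : ∀ t, cos (δ * t) = cos (|δ| * t) := fun t => by
    rcases abs_choice δ with h | h <;> simp [h]
  simp_rw [habs]
  rw [intervalIntegral.integral_comp_mul_left (fun x => max (cos x) 0) hδ, mul_zero, smul_eq_mul]
  calc |δ|⁻¹ * cosPosPrimitive (|δ| * T) ≤ |δ|⁻¹ * (|δ| * T / 2) :=
        mul_le_mul_of_nonneg_left (cosPosPrimitive_le_half h) (by positivity)
    _ = T / 2 := by field_simp

open Finset in
lemma sum_le_card_compl_add_sum_max_zero {ι : Type*} [Fintype ι] [DecidableEq ι] (s : Finset ι)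
    {a : ι → ℝ} (ha : ∀ i, a i ≤ 1) : ∑ i, a i ≤ #sᶜ + ∑ i ∈ s, max (a i) 0 := by
  rw [← sum_add_sum_compl s, add_comm]
  gcongr
  · simpa using sum_le_card_nsmul sᶜ a 1 fun i _ => ha i
  · exact le_max_left _ _

lemma volume_Icc_inter_le_integral_div {g : ℝ → ℝ} {T c : ℝ} (hT : 0 ≤ T) (hc : 0 < c)
    (hg : IntegrableOn g (Icc 0 T)) (hg0 : ∀ t ∈ Icc 0 T, 0 ≤ g t) :
    volume {t | t ∈ Icc 0 T ∧ c ≤ g t} ≤ ENNReal.ofReal ((∫ t in (0 : ℝ)..T, g t) / c) := by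
  have hmarkov := mul_meas_ge_le_integral_of_nonneg
    (ae_restrict_of_forall_mem measurableSet_Icc hg0) hg c
  rw [measureReal_restrict_apply' measurableSet_Icc, inter_comm,
    integral_Icc_eq_integral_Ioc, ← intervalIntegral.integral_of_le hT] at hmarkov
  have hfin : volume {t | t ∈ Icc 0 T ∧ c ≤ g t} ≠ ⊤ :=
    (measure_lt_top_of_subset (fun t ht => ht.1) (by simp)).ne
  rw [ENNReal.le_ofReal_iff_toReal_le hfin (div_nonneg (hmarkov.trans' (by positivity)) hc.le),
    le_div_iff₀ hc, mul_comm]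
  exact hmarkov

section GapPairs

open Finset

variable {N : ℕ} (lam : Fin N → ℝ) (ε : ℝ)

noncomputable def gapPairs : Finset (Fin N × Fin N) := {p | ε ≤ |lam p.1 - lam p.2|}

-- The paper's `I_{≥ε}` with `cos` replaced by its positive part, so that Markov's inequality
-- applies; it is `0` when there are no pairs with large gap.
noncomputable def gapCosPosMean (t : ℝ) : ℝ :=
  (#(gapPairs lam ε) : ℝ)⁻¹ * ∑ p ∈ gapPairs lam ε, max (cos ((lam p.1 - lam p.2) * t)) 0

lemma natCard_setOf_le_abs_sub_eq_card_gapPairs :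
    Nat.card {p : Fin N × Fin N | ε ≤ |lam p.1 - lam p.2|} = #(gapPairs lam ε) := by
  rw [Nat.card_eq_card_toFinset]
  congr 1
  ext p
  simp [gapPairs]

lemma continuous_gapCosPosMean : Continuous (gapCosPosMean lam ε) := by
  unfold gapCosPosMean
  fun_prop

lemma gapCosPosMean_nonneg (t : ℝ) : 0 ≤ gapCosPosMean lam ε t :=
  mul_nonneg (by positivity) (sum_nonneg fun _ _ => le_max_right _ _)

lemma mean_cos_le_one_sub_add_mul_gapCosPosMean (t : ℝ) :
    1 / (N : ℝ) ^ 2 * ∑ r : Fin N, ∑ s : Fin N, cos ((lam r - lam s) * t) ≤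
      1 - 1 / (N : ℝ) ^ 2 * #(gapPairs lam ε) +
        1 / (N : ℝ) ^ 2 * #(gapPairs lam ε) * gapCosPosMean lam ε t := by
  set P := gapPairs lam ε
  set S := ∑ p ∈ P, max (cos ((lam p.1 - lam p.2) * t)) 0
  have hsum : ∑ r : Fin N, ∑ s : Fin N, cos ((lam r - lam s) * t) ≤ #Pᶜ + S := by
    rw [← Fintype.sum_prod_type' fun r s => cos ((lam r - lam s) * t)]
    exact sum_le_card_compl_add_sum_max_zero P fun _ => cos_le_one _
  have hcompl : (#Pᶜ : ℝ) = (N : ℝ) ^ 2 - #P := by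
    rw [card_compl, Nat.cast_sub (card_le_univ P)]
    simp [sq]
  have hmean : (#P : ℝ) * gapCosPosMean lam ε t = S := by
    rcases P.eq_empty_or_nonempty with hP | hP
    · simp [S, hP]
    · exact mul_inv_cancel_left₀ (by positivity) S
  rw [mul_assoc _ _ (gapCosPosMean lam ε t), hmean]
  calc 1 / (N : ℝ) ^ 2 * ∑ r : Fin N, ∑ s : Fin N, cos ((lam r - lam s) * t)
      ≤ 1 / (N : ℝ) ^ 2 * (#Pᶜ + S) := by gcongr
    _ = (N : ℝ) ^ 2 / (N : ℝ) ^ 2 - 1 / (N : ℝ) ^ 2 * #P + 1 / (N : ℝ) ^ 2 * S := by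
      rw [hcompl]; ring
    _ ≤ _ := by gcongr; exact div_self_le_one _

lemma integral_gapCosPosMean_le {T : ℝ} (hε : 0 < ε) (hT : 2 ≤ ε * T) :
    ∫ t in (0 : ℝ)..T, gapCosPosMean lam ε t ≤ T / 2 := by
  have hterm : ∀ p ∈ gapPairs lam ε,
      ∫ t in (0 : ℝ)..T, max (cos ((lam p.1 - lam p.2) * t)) 0 ≤ T / 2 := fun p hp => by
    have hgap : ε ≤ |lam p.1 - lam p.2| := by simpa [gapPairs] using hp
    exact integral_max_cos_mul_le_half
      (hT.trans (mul_le_mul_of_nonneg_right hgap (by nlinarith)))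
  simp only [gapCosPosMean]
  rw [intervalIntegral.integral_const_mul, intervalIntegral.integral_finsetSum fun _ _ =>
    Continuous.intervalIntegrable (by fun_prop) _ _]
  calc (#(gapPairs lam ε) : ℝ)⁻¹ * ∑ p ∈ gapPairs lam ε,
        ∫ t in (0 : ℝ)..T, max (cos ((lam p.1 - lam p.2) * t)) 0
      ≤ (#(gapPairs lam ε) : ℝ)⁻¹ * (#(gapPairs lam ε) * (T / 2)) := by
        gcongr
        simpa using sum_le_card_nsmul _ _ _ hterm
    _ ≤ T / 2 := by
      rw [← mul_assoc]
      exact mul_le_of_le_one_left (by nlinarith) inv_mul_le_one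

end GapPairs

theorem spectral_condition_general {N : ℕ} (lam : Fin N → ℝ) (ε : ℝ) (hε : 0 < ε)
    (Λ : ℝ)
    (hΛ : Λ = (1 / (N : ℝ) ^ 2) *
      (Nat.card {p : Fin N × Fin N | ε ≤ |lam p.1 - lam p.2|}))
    (I : ℝ → ℝ)
    (hI : ∀ t, I t = (1 / (N : ℝ) ^ 2) *
      ∑ r : Fin N, ∑ s : Fin N, Real.cos ((lam r - lam s) * t)) :
    ENNReal.ofReal ((1 / 3) * (2 / ε)) ≤
      volume {t : ℝ | t ∈ Set.Icc 0 (2 / ε) ∧ I t ≤ 1 - Λ / 4} := by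
  set T := 2 / ε
  have hT : 0 ≤ T := by positivity
  rw [natCard_setOf_le_abs_sub_eq_card_gapPairs] at hΛ
  have hΛ0 : 0 ≤ Λ := hΛ ▸ by positivity
  have hgood : ∀ t, gapCosPosMean lam ε t < 3 / 4 → I t ≤ 1 - Λ / 4 := fun t ht => by
    have := mean_cos_le_one_sub_add_mul_gapCosPosMean lam ε t
    rw [← hI, ← hΛ] at this
    nlinarith
  have hbad : volume {t | t ∈ Icc 0 T ∧ 3 / 4 ≤ gapCosPosMean lam ε t} ≤
      ENNReal.ofReal (2 / 3 * T) := by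
    refine (volume_Icc_inter_le_integral_div hT (by norm_num)
      (continuous_gapCosPosMean lam ε).integrableOn_Icc
      fun t _ => gapCosPosMean_nonneg lam ε t).trans (ENNReal.ofReal_le_ofReal ?_)
    have := integral_gapCosPosMean_le lam ε hε (T := T) (mul_div_cancel₀ 2 hε.ne').ge
    linarith
  calc ENNReal.ofReal (1 / 3 * T) = volume (Icc 0 T) - ENNReal.ofReal (2 / 3 * T) := by
        rw [Real.volume_Icc, ← ENNReal.ofReal_sub _ (by positivity)]
        ring_nf
    _ ≤ volume (Icc 0 T) - volume {t | t ∈ Icc 0 T ∧ 3 / 4 ≤ gapCosPosMean lam ε t} := by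
        gcongr
    _ ≤ volume (Icc 0 T \ {t | t ∈ Icc 0 T ∧ 3 / 4 ≤ gapCosPosMean lam ε t}) :=
        le_measure_sdiff
    _ ≤ _ := by
        exact measure_mono fun t ⟨ht, hnot⟩ => ⟨ht, hgood t (not_le.1 fun h => hnot ⟨ht, h⟩)⟩

/-- Spectral condition lemma: for `t` uniform in `[0, 2/ε]`, with probability at least
`1/3` the Bell identity probability `I(t)` is at most `1 - Λ/4`. -/
theorem spectral_condition {N : ℕ} (hN : 0 < N) (lam : Fin N → ℝ) (ε : ℝ) (hε : 0 < ε)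
    (Λ : ℝ)
    (hΛ : Λ = (1 / (N : ℝ) ^ 2) *
      (Nat.card {p : Fin N × Fin N | ε ≤ |lam p.1 - lam p.2|}))
    (I : ℝ → ℝ)
    (hI : ∀ t, I t = (1 / (N : ℝ) ^ 2) *
      ∑ r : Fin N, ∑ s : Fin N, Real.cos ((lam r - lam s) * t)) :
    ENNReal.ofReal ((1 / 3) * (2 / ε)) ≤
      volume {t : ℝ | t ∈ Set.Icc 0 (2 / ε) ∧ I t ≤ 1 - Λ / 4} :=
  spectral_condition_general lam ε hε Λ hΛ I hI
end

section
/- Let ρ and ρ' be positive definite density matrices of the form ρ = e^{-βH}/Tr[e^{-βH}] and ρ' = e^{-βH'}/Tr[e^{-βH'}] for Hermitian H, H' and β > 0. Then ‖ρ - ρ'‖_tr ≤ √(2β·Tr[(ρ - ρ')(H' - H)]). -/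
open Matrix ComplexOrder

/-- Trace norm of a complex matrix: `Tr √(AᴴA)`. -/
noncomputable def trNorm {N : ℕ} (A : Matrix (Fin N) (Fin N) ℂ) : ℝ :=
  ((Matrix.posSemidef_conjTranspose_mul_self A).1.eigenvectorUnitary.1 *
    diagonal (((↑) : ℝ → ℂ) ∘ (√·) ∘ (Matrix.posSemidef_conjTranspose_mul_self A).1.eigenvalues) *
    (star (Matrix.posSemidef_conjTranspose_mul_self A).1.eigenvectorUnitary : Matrix (Fin N) (Fin N) ℂ)).trace.re

/-- Gibbs state of a Hamiltonian `H` at inverse temperature `β`. -/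
noncomputable def gibbs {N : ℕ} (H : Matrix (Fin N) (Fin N) ℂ) (β : ℝ) :
    Matrix (Fin N) (Fin N) ℂ :=
  ((NormedSpace.exp (((-β : ℂ)) • H)).trace)⁻¹ • NormedSpace.exp (((-β : ℂ)) • H)

/-!
Write `ρ = U diag(p) U*`, `ρ' = V diag(q) V*` in the eigenbases of `H` and `H'`, and let `S` be
the Hermitian unitary `sign(ρ - ρ')`, so that `‖ρ - ρ'‖_tr = Tr[(ρ - ρ') S]`. With the overlap
matrix `W = U*V` and the unitary `G = U*SV`,
  `Tr[(ρ - ρ') S] = ∑ (p_i - q_j) conj(W_ij) G_ij`,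
  `Tr[(ρ - ρ')(log ρ - log ρ')] = ∑ |W_ij|² (p_i - q_j)(log p_i - log q_j)`.
Cauchy–Schwarz with weights `p_i + q_j` (for which `∑ |G_ij|² (p_i + q_j) = 2`), together with
`(a - b)² ≤ (a + b)(a - b)(log a - log b)`, bounds the square of the first sum by twice the
second. Finally `log ρ = -βH - log Z`, and the normalisations cancel because `|W_ij|²` is doubly
stochastic.
-/

theorem Real.sq_sub_le_add_mul_sub_mul_log_sub {a b : ℝ} (ha : 0 < a) (hb : 0 < b) :
    (a - b) ^ 2 ≤ (a + b) * ((a - b) * (Real.log a - Real.log b)) := by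
  wlog hba : b ≤ a generalizing a b
  · linarith [this hb ha (le_of_not_ge hba)]
  have hlog : (a - b) / a ≤ Real.log a - Real.log b := by
    rw [← Real.log_div ha.ne' hb.ne']
    have := Real.one_sub_inv_le_log_of_pos (div_pos ha hb)
    rwa [inv_div, one_sub_div ha.ne'] at this
  have hab : a - b ≤ a * (Real.log a - Real.log b) := by
    rwa [div_le_iff₀' ha] at hlog
  have hlog_nonneg : 0 ≤ Real.log a - Real.log b :=
    sub_nonneg.mpr (Real.log_le_log hb hba)
  nlinarith [mul_le_mul_of_nonneg_left hab (sub_nonneg.mpr hba),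
    mul_nonneg (mul_nonneg hb.le (sub_nonneg.mpr hba)) hlog_nonneg]

theorem sq_sum_mul_abs_sub_le_two_mul_sum_mul_log_sub {ι κ : Type*} [Fintype ι] [Fintype κ]
    {p : ι → ℝ} {q : κ → ℝ} (hp : ∀ i, 0 < p i) (hq : ∀ j, 0 < q j)
    (hp_sum : ∑ i, p i = 1) (hq_sum : ∑ j, q j = 1) {a : ι → κ → ℝ}
    (ha_row : ∀ i, ∑ j, a i j ^ 2 = 1) (ha_col : ∀ j, ∑ i, a i j ^ 2 = 1) (b : ι → κ → ℝ) :
    (∑ i, ∑ j, a i j * b i j * |p i - q j|) ^ 2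
      ≤ 2 * ∑ i, ∑ j, b i j ^ 2 * ((p i - q j) * (Real.log (p i) - Real.log (q j))) := by
  have hpq : ∀ i j, 0 < p i + q j := fun i j => add_pos (hp i) (hq j)
  have ha_mass : ∑ i, ∑ j, a i j ^ 2 * (p i + q j) = 2 := by
    simp only [mul_add, Finset.sum_add_distrib, ← Finset.sum_mul]
    rw [Finset.sum_comm (f := fun i j => a i j ^ 2 * q j)]
    simp only [← Finset.sum_mul, ha_row, ha_col, one_mul, hp_sum, hq_sum]
    norm_num
  have hcauchy : (∑ i, ∑ j, a i j * b i j * |p i - q j|) ^ 2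
      ≤ (∑ i, ∑ j, a i j ^ 2 * (p i + q j))
        * ∑ i, ∑ j, b i j ^ 2 * ((p i - q j) ^ 2 / (p i + q j)) := by
    simp only [← Fintype.sum_prod_type']
    refine Finset.sum_sq_le_sum_mul_sum_of_sq_le_mul _ (fun x _ => ?_) (fun x _ => ?_)
      (fun x _ => le_of_eq ?_)
    · exact mul_nonneg (sq_nonneg _) (hpq _ _).le
    · exact mul_nonneg (sq_nonneg _) (div_nonneg (sq_nonneg _) (hpq _ _).le)
    · field_simp [(hpq x.1 x.2).ne']
      rw [sq_abs]
  calc _ ≤ _ := hcauchy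
    _ ≤ 2 * ∑ i, ∑ j, b i j ^ 2 * ((p i - q j) * (Real.log (p i) - Real.log (q j))) := by
      rw [ha_mass]
      gcongr with i _ j _
      rw [div_le_iff₀' (hpq i j)]
      exact Real.sq_sub_le_add_mul_sub_mul_log_sub (hp i) (hq j)

section MixedBasis

variable {n R : Type*} [Fintype n] [DecidableEq n] [CommRing R] [StarRing R]

theorem Matrix.trace_conj_diagonal_mul (U A : Matrix n n R) (f : n → R) :
    (U * diagonal f * star U * A).trace = ∑ i, f i * (star U * A * U) i i := by
  rw [show U * diagonal f * star U * A = U * (diagonal f * (star U * A)) by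
    simp only [Matrix.mul_assoc], trace_mul_comm]
  simp only [trace, diag, diagonal_mul, Matrix.mul_assoc]

theorem Matrix.trace_conj_diagonal_sub_conj_diagonal_mul {U V : Matrix n n R}
    (hU : U ∈ unitaryGroup n R) (hV : V ∈ unitaryGroup n R) (f g : n → R) (A : Matrix n n R) :
    ((U * diagonal f * star U - V * diagonal g * star V) * A).trace
      = ∑ i, ∑ j, (f i - g j) * star ((star U * V) i j) * (star U * A * V) i j := by
  have hUAU : star U * A * U = (star U * A * V) * (star V * U) := by
    rw [Matrix.mul_assoc _ V, ← Matrix.mul_assoc V, mem_unitaryGroup_iff.mp hV, Matrix.one_mul]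
  have hVAV : star V * A * V = (star V * U) * (star U * A * V) := by
    simp only [← Matrix.mul_assoc]
    rw [Matrix.mul_assoc (star V) U, mem_unitaryGroup_iff.mp hU, Matrix.mul_one]
  have hstar : ∀ i j, star ((star U * V) i j) = (star V * U) j i := fun i j => by
    rw [← star_apply, star_mul, star_star]
  rw [sub_mul, trace_sub, trace_conj_diagonal_mul, trace_conj_diagonal_mul, hUAU, hVAV]
  simp only [hstar]
  set G := star U * A * V
  set X := star V * U
  simp only [mul_apply, Finset.mul_sum]
  rw [Finset.sum_comm (f := fun j i => g j * (X j i * G i j)), ← Finset.sum_sub_distrib]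
  refine Finset.sum_congr rfl fun i _ => ?_
  rw [← Finset.sum_sub_distrib]
  exact Finset.sum_congr rfl fun j _ => by ring

end MixedBasis

section Spectral

variable {n : Type*} [Fintype n] [DecidableEq n]

theorem Matrix.sum_norm_sq_row_of_mem_unitaryGroup {U : Matrix n n ℂ}
    (hU : U ∈ unitaryGroup n ℂ) (i : n) : ∑ j, ‖U i j‖ ^ 2 = 1 := by
  have h : (U * star U) i i = 1 := by rw [mem_unitaryGroup_iff.mp hU, one_apply_eq]
  simp only [mul_apply, star_apply, RCLike.star_def, Complex.mul_conj'] at h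
  exact_mod_cast h

theorem Matrix.sum_norm_sq_col_of_mem_unitaryGroup {U : Matrix n n ℂ}
    (hU : U ∈ unitaryGroup n ℂ) (j : n) : ∑ i, ‖U i j‖ ^ 2 = 1 := by
  have h : (star U * U) j j = 1 := by rw [mem_unitaryGroup_iff'.mp hU, one_apply_eq]
  simp only [mul_apply, star_apply, RCLike.star_def, Complex.conj_mul'] at h
  exact_mod_cast h

theorem Matrix.isHermitian_conj_diagonal_ofReal (U : Matrix n n ℂ) (r : n → ℝ) :
    (U * diagonal (fun i => (r i : ℂ)) * star U).IsHermitian :=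
  isHermitian_mul_mul_conjTranspose U (isHermitian_diagonal_of_self_adjoint _ (by ext; simp))

theorem Matrix.IsHermitian.eq_conj_diagonal {A : Matrix n n ℂ} (hA : A.IsHermitian) :
    A = (hA.eigenvectorUnitary : Matrix n n ℂ) * diagonal (fun i => (hA.eigenvalues i : ℂ))
      * star (hA.eigenvectorUnitary : Matrix n n ℂ) := by
  conv_lhs => rw [hA.spectral_theorem, Unitary.conjStarAlgAut_apply]
  rfl

theorem Matrix.norm_trace_conj_diagonal_sub_conj_diagonal_mul_le {U V : Matrix n n ℂ}
    (hU : U ∈ unitaryGroup n ℂ) (hV : V ∈ unitaryGroup n ℂ) (f g : n → ℝ) (A : Matrix n n ℂ) :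
    ‖((U * diagonal (fun i => (f i : ℂ)) * star U - V * diagonal (fun j => (g j : ℂ)) * star V)
        * A).trace‖
      ≤ ∑ i, ∑ j, ‖(star U * A * V) i j‖ * ‖(star U * V) i j‖ * |f i - g j| := by
  rw [trace_conj_diagonal_sub_conj_diagonal_mul hU hV]
  refine (norm_sum_le _ _).trans (Finset.sum_le_sum fun i _ => (norm_sum_le _ _).trans ?_)
  refine Finset.sum_le_sum fun j _ => le_of_eq ?_
  rw [norm_mul, norm_mul, norm_star, ← Complex.ofReal_sub, Complex.norm_real, Real.norm_eq_abs]
  ring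

theorem Matrix.trace_conj_diagonal_sub_mul_conj_diagonal_sub {U V : Matrix n n ℂ}
    (hU : U ∈ unitaryGroup n ℂ) (hV : V ∈ unitaryGroup n ℂ) (f g a b : n → ℝ) :
    ((U * diagonal (fun i => (f i : ℂ)) * star U - V * diagonal (fun j => (g j : ℂ)) * star V)
        * (V * diagonal (fun j => (b j : ℂ)) * star V
          - U * diagonal (fun i => (a i : ℂ)) * star U)).trace
      = (∑ i, ∑ j, ‖(star U * V) i j‖ ^ 2 * (f i - g j) * (b j - a i) : ℝ) := by
  have hconj : star U * (V * diagonal (fun j => (b j : ℂ)) * star V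
      - U * diagonal (fun i => (a i : ℂ)) * star U) * V
      = star U * V * diagonal (fun j => (b j : ℂ))
        - diagonal (fun i => (a i : ℂ)) * (star U * V) := by
    simp only [Matrix.mul_sub, Matrix.sub_mul, Matrix.mul_assoc, mem_unitaryGroup_iff'.mp hV,
      ← Matrix.mul_assoc (star U) U, mem_unitaryGroup_iff'.mp hU, Matrix.mul_one, Matrix.one_mul]
  rw [trace_conj_diagonal_sub_conj_diagonal_mul hU hV, hconj]
  push_cast
  refine Finset.sum_congr rfl fun i _ => Finset.sum_congr rfl fun j _ => ?_
  rw [sub_apply, mul_diagonal, diagonal_mul, Complex.star_def, ← Complex.conj_mul']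
  ring

noncomputable def eigenbasisOverlap {H H' : Matrix n n ℂ} (hH : H.IsHermitian)
    (hH' : H'.IsHermitian) : Matrix n n ℂ :=
  star (hH.eigenvectorUnitary : Matrix n n ℂ) * hH'.eigenvectorUnitary

theorem eigenbasisOverlap_mem_unitaryGroup {H H' : Matrix n n ℂ} (hH : H.IsHermitian)
    (hH' : H'.IsHermitian) : eigenbasisOverlap hH hH' ∈ unitaryGroup n ℂ :=
  mul_mem (Unitary.star_mem hH.eigenvectorUnitary.2) hH'.eigenvectorUnitary.2

theorem Matrix.IsHermitian.exp_smul_eq_conj_diagonal {H : Matrix n n ℂ} (hH : H.IsHermitian)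
    (c : ℂ) :
    NormedSpace.exp (c • H) = (hH.eigenvectorUnitary : Matrix n n ℂ)
      * diagonal (fun i => Complex.exp (c * hH.eigenvalues i))
      * star (hH.eigenvectorUnitary : Matrix n n ℂ) := by
  set U : Matrix n n ℂ := (hH.eigenvectorUnitary : Matrix n n ℂ)
  have hU : IsUnit U := (Unitary.toUnits hH.eigenvectorUnitary).isUnit
  have hUinv : U⁻¹ = star U := inv_eq_left_inv (Unitary.coe_star_mul_self _)
  have hcH : c • H = U * diagonal (c • fun i => (hH.eigenvalues i : ℂ)) * U⁻¹ := by
    conv_lhs => rw [hH.eq_conj_diagonal]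
    rw [hUinv, diagonal_smul, mul_smul_comm, smul_mul_assoc]
  rw [hcH, exp_conj _ _ hU, exp_diagonal, hUinv]
  congr
  ext i
  simp [Complex.exp_eq_exp_ℂ]

end Spectral

section Boltzmann

variable {ι : Type*} [Fintype ι] (E : ι → ℝ) (β : ℝ)

noncomputable def partitionFunction : ℝ := ∑ k, Real.exp (-β * E k)

noncomputable def boltzmann (i : ι) : ℝ := Real.exp (-β * E i) / partitionFunction E β

variable [Nonempty ι]

theorem partitionFunction_pos : 0 < partitionFunction E β :=
  Finset.sum_pos (fun _ _ => Real.exp_pos _) Finset.univ_nonempty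

theorem boltzmann_pos (i : ι) : 0 < boltzmann E β i :=
  div_pos (Real.exp_pos _) (partitionFunction_pos E β)

theorem sum_boltzmann : ∑ i, boltzmann E β i = 1 := by
  simp only [boltzmann, ← Finset.sum_div]
  exact div_self (partitionFunction_pos E β).ne'

theorem log_boltzmann (i : ι) :
    Real.log (boltzmann E β i) = -β * E i - Real.log (partitionFunction E β) := by
  rw [boltzmann, Real.log_div (Real.exp_pos _).ne' (partitionFunction_pos E β).ne', Real.log_exp]

end Boltzmann

theorem sum_sum_mul_sub_mul_log_boltzmann_sub {ι : Type*} [Fintype ι] [Nonempty ι]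
    (d e : ι → ℝ) (β : ℝ) {P : ι → ι → ℝ} (hP_row : ∀ i, ∑ j, P i j = 1)
    (hP_col : ∀ j, ∑ i, P i j = 1) :
    ∑ i, ∑ j, P i j * ((boltzmann d β i - boltzmann e β j)
        * (Real.log (boltzmann d β i) - Real.log (boltzmann e β j)))
      = β * ∑ i, ∑ j, P i j * (boltzmann d β i - boltzmann e β j) * (e j - d i) := by
  set c := Real.log (partitionFunction e β) - Real.log (partitionFunction d β)
  have hmass : ∑ i, ∑ j, P i j * (boltzmann d β i - boltzmann e β j) = 0 := by
    simp only [mul_sub, Finset.sum_sub_distrib]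
    rw [Finset.sum_comm (f := fun i j => P i j * boltzmann e β j)]
    simp only [← Finset.sum_mul, hP_row, hP_col, one_mul, sum_boltzmann, sub_self]
  calc _ = ∑ i, ∑ j, (β * (P i j * (boltzmann d β i - boltzmann e β j) * (e j - d i))
          + c * (P i j * (boltzmann d β i - boltzmann e β j))) := by
        simp only [log_boltzmann, c]
        congr! 2 with i _ j _
        ring
    _ = _ := by
        simp only [Finset.sum_add_distrib, ← Finset.mul_sum, hmass, mul_zero, add_zero]

section TraceNorm

variable {N : ℕ}

theorem trNorm_eq_re_trace_cfc_sqrt (A : Matrix (Fin N) (Fin N) ℂ) :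
    trNorm A = (cfc Real.sqrt (Aᴴ * A)).trace.re := by
  rw [(posSemidef_conjTranspose_mul_self A).1.cfc_eq, IsHermitian.cfc,
    Unitary.conjStarAlgAut_apply]
  rfl

theorem Matrix.IsHermitian.trNorm_eq_re_trace_cfc_abs {A : Matrix (Fin N) (Fin N) ℂ}
    (hA : A.IsHermitian) : trNorm A = (cfc (fun x : ℝ => |x|) A).trace.re := by
  have hA' : IsSelfAdjoint A := hA
  have hsq : Aᴴ * A = cfc (fun x : ℝ => x * x) A := by
    rw [hA.eq, cfc_mul _ _ A, cfc_id' ℝ A]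
  rw [trNorm_eq_re_trace_cfc_sqrt, hsq, ← cfc_comp' Real.sqrt (fun x : ℝ => x * x) A]
  simp only [Real.sqrt_mul_self_eq_abs]

theorem Matrix.IsHermitian.exists_mem_unitaryGroup_trNorm_eq {A : Matrix (Fin N) (Fin N) ℂ}
    (hA : A.IsHermitian) : ∃ S ∈ unitaryGroup (Fin N) ℂ, trNorm A = (A * S).trace.re := by
  have hA' : IsSelfAdjoint A := hA
  -- not `SignType.sign`, which vanishes at `0` and would make `cfc sgn A` singular
  set sgn : ℝ → ℝ := fun x => if 0 ≤ x then 1 else -1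
  have hsgn : ContinuousOn sgn (spectrum ℝ A) := A.finite_real_spectrum.continuousOn _
  refine ⟨cfc sgn A, ?_, ?_⟩
  · rw [mem_unitaryGroup_iff', (cfc_predicate sgn A).star_eq, ← cfc_mul sgn sgn A]
    refine (cfc_congr fun x _ => ?_).trans (cfc_const_one ℝ A)
    by_cases hx : 0 ≤ x <;> simp [sgn, hx]
  · have habs : A * cfc sgn A = cfc (fun x : ℝ => |x|) A := calc
      A * cfc sgn A = cfc (fun x : ℝ => x) A * cfc sgn A := by rw [cfc_id' ℝ A]
      _ = cfc (fun x => x * sgn x) A := (cfc_mul _ _ A).symm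
      _ = cfc (fun x : ℝ => |x|) A := cfc_congr fun x _ => by
        by_cases hx : 0 ≤ x
        · simp [sgn, hx, abs_of_nonneg hx]
        · simp [sgn, hx, abs_of_neg (not_le.mp hx)]
    rw [habs, hA.trNorm_eq_re_trace_cfc_abs]

end TraceNorm

section Gibbs

variable {N : ℕ} {H H' : Matrix (Fin N) (Fin N) ℂ}

theorem gibbs_eq_conj_diagonal (hH : H.IsHermitian) (β : ℝ) :
    gibbs H β = (hH.eigenvectorUnitary : Matrix (Fin N) (Fin N) ℂ)
      * diagonal (fun i => (boltzmann hH.eigenvalues β i : ℂ))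
      * star (hH.eigenvectorUnitary : Matrix (Fin N) (Fin N) ℂ) := by
  have hexp : ∀ i, Complex.exp (-β * hH.eigenvalues i) = (Real.exp (-β * hH.eigenvalues i) : ℂ) :=
    fun i => by push_cast; rfl
  have htrace : (NormedSpace.exp ((-β : ℂ) • H)).trace = partitionFunction hH.eigenvalues β := by
    rw [hH.exp_smul_eq_conj_diagonal, trace_mul_cycle, Unitary.coe_star_mul_self, one_mul,
      trace_diagonal, partitionFunction]
    push_cast
    rfl
  rw [gibbs, htrace, hH.exp_smul_eq_conj_diagonal, ← smul_mul_assoc, ← mul_smul_comm,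
    ← diagonal_smul]
  congr
  ext i
  simp only [Pi.smul_apply, smul_eq_mul, boltzmann, hexp]
  push_cast
  ring

theorem abs_trNorm_gibbs_sub_le (hH : H.IsHermitian) (hH' : H'.IsHermitian) (β : ℝ) :
    ∃ G ∈ unitaryGroup (Fin N) ℂ, |trNorm (gibbs H β - gibbs H' β)|
      ≤ ∑ i, ∑ j, ‖G i j‖ * ‖eigenbasisOverlap hH hH' i j‖
          * |boltzmann hH.eigenvalues β i - boltzmann hH'.eigenvalues β j| := by
  rw [gibbs_eq_conj_diagonal hH, gibbs_eq_conj_diagonal hH']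
  obtain ⟨S, hS, hS_trNorm⟩ := ((isHermitian_conj_diagonal_ofReal _ _).sub
    (isHermitian_conj_diagonal_ofReal _ _)).exists_mem_unitaryGroup_trNorm_eq
  refine ⟨_, mul_mem (mul_mem (Unitary.star_mem hH.eigenvectorUnitary.2) hS)
    hH'.eigenvectorUnitary.2, ?_⟩
  rw [hS_trNorm]
  exact (Complex.abs_re_le_norm _).trans (norm_trace_conj_diagonal_sub_conj_diagonal_mul_le
    hH.eigenvectorUnitary.2 hH'.eigenvectorUnitary.2 _ _ S)

theorem re_trace_gibbs_sub_mul_sub (hH : H.IsHermitian) (hH' : H'.IsHermitian) (β : ℝ) :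
    (((gibbs H β - gibbs H' β) * (H' - H)).trace).re
      = ∑ i, ∑ j, ‖eigenbasisOverlap hH hH' i j‖ ^ 2
          * (boltzmann hH.eigenvalues β i - boltzmann hH'.eigenvalues β j)
          * (hH'.eigenvalues j - hH.eigenvalues i) := by
  have hH'H : H' - H = (hH'.eigenvectorUnitary : Matrix (Fin N) (Fin N) ℂ)
        * diagonal (fun j => (hH'.eigenvalues j : ℂ))
        * star (hH'.eigenvectorUnitary : Matrix _ _ ℂ)
      - (hH.eigenvectorUnitary : Matrix (Fin N) (Fin N) ℂ)
        * diagonal (fun i => (hH.eigenvalues i : ℂ))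
        * star (hH.eigenvectorUnitary : Matrix _ _ ℂ) := by
    conv_lhs => rw [hH.eq_conj_diagonal, hH'.eq_conj_diagonal]
  rw [gibbs_eq_conj_diagonal hH, gibbs_eq_conj_diagonal hH', hH'H,
    trace_conj_diagonal_sub_mul_conj_diagonal_sub hH.eigenvectorUnitary.2
      hH'.eigenvectorUnitary.2, Complex.ofReal_re]
  rfl

end Gibbs

theorem gibbs_pinsker_general {N : ℕ} (hN : 1 ≤ N)
    (H H' : Matrix (Fin N) (Fin N) ℂ) (hH : H.IsHermitian) (hH' : H'.IsHermitian)
    (β : ℝ) :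
    trNorm (gibbs H β - gibbs H' β)
      ≤ Real.sqrt (2 * β * (((gibbs H β - gibbs H' β) * (H' - H)).trace).re) := by
  have : Nonempty (Fin N) := ⟨⟨0, hN⟩⟩
  obtain ⟨G, hG, htrNorm⟩ := abs_trNorm_gibbs_sub_le hH hH' β
  have hW := eigenbasisOverlap_mem_unitaryGroup hH hH'
  refine (le_abs_self _).trans (Real.abs_le_sqrt ?_)
  calc trNorm (gibbs H β - gibbs H' β) ^ 2 = |trNorm (gibbs H β - gibbs H' β)| ^ 2 :=
        (sq_abs _).symm
    _ ≤ _ := pow_le_pow_left₀ (abs_nonneg _) htrNorm 2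
    _ ≤ _ := sq_sum_mul_abs_sub_le_two_mul_sum_mul_log_sub (boltzmann_pos _ β)
        (boltzmann_pos _ β) (sum_boltzmann _ β) (sum_boltzmann _ β)
        (sum_norm_sq_row_of_mem_unitaryGroup hG) (sum_norm_sq_col_of_mem_unitaryGroup hG) _
    _ = 2 * β * (((gibbs H β - gibbs H' β) * (H' - H)).trace).re := by
      rw [sum_sum_mul_sub_mul_log_boltzmann_sub _ _ β (sum_norm_sq_row_of_mem_unitaryGroup hW)
        (sum_norm_sq_col_of_mem_unitaryGroup hW), re_trace_gibbs_sub_mul_sub hH hH']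
      ring

/-- Pinsker-type bound for Gibbs states (Lemma 2.1, Eq. (trnormforGibbs0)). -/
theorem gibbs_pinsker {N : ℕ} (hN : 1 ≤ N)
    (H H' : Matrix (Fin N) (Fin N) ℂ) (hH : H.IsHermitian) (hH' : H'.IsHermitian)
    (β : ℝ) (hβ : 0 < β) :
    trNorm (gibbs H β - gibbs H' β)
      ≤ Real.sqrt (2 * β * (((gibbs H β - gibbs H' β) * (H' - H)).trace).re) :=
  gibbs_pinsker_general hN H H' hH hH' β
end
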